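/- Define a(t) = ((3+t)/√2) · √(1 + (1−t)²/2) for t ∈ [−1, 1] (the area of one trapezium of the rotated main-diagonal hexagonal section of the cube [−1,1]³). Then a′(0) = 0, a″(0) = 0, and a‴(0) = 2/√3 > 0; consequently a has no local extremum at t = 0. -/

import Mathlib

/-- The area of one trapezium of the rotated main-diagonal hexagonal section of `[-1,1]³`. -/
noncomputable def a (t : ℝ) : ℝ :=
  ((3 + t) / Real.sqrt 2) * Real.sqrt (1 + (1 - t) ^ 2 / 2)

noncomputable def aB (t : ℝ) : ℝ := t ^ 2 / Real.sqrt (2 + (1 - t) ^ 2)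

noncomputable def aB' (t : ℝ) : ℝ :=
  2 * t / Real.sqrt (2 + (1 - t) ^ 2) +
    t ^ 2 * (1 - t) / (Real.sqrt (2 + (1 - t) ^ 2) * (2 + (1 - t) ^ 2))

lemma hA (t : ℝ) : HasDerivAt a (aB t) t := by
  have h1 : HasDerivAt (fun x : ℝ => 1 - x) (-1) t := (hasDerivAt_id t).const_sub 1
  have h2 := h1.pow 2
  have h3 : HasDerivAt (fun x : ℝ => 1 + (1 - x) ^ 2 / 2)
      (((2:ℕ) * (1 - t) ^ (2-1) * (-1)) / 2) t := (h2.div_const 2).const_add 1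
  have hgpos : (0:ℝ) < 1 + (1 - t) ^ 2 / 2 := by positivity
  have hsq := (Real.hasDerivAt_sqrt hgpos.ne').comp t h3
  have h4 : HasDerivAt (fun x : ℝ => (3 + x) / Real.sqrt 2) (1 / Real.sqrt 2) t := by
    simpa using ((hasDerivAt_id t).const_add 3).div_const (Real.sqrt 2)
  have hA0 := h4.mul hsq
  have hveq : (1:ℝ) + (1 - t) ^ 2 / 2 = (2 + (1 - t) ^ 2) / 2 := by ring
  have hvpos : (0:ℝ) < 2 + (1 - t) ^ 2 := by positivity
  set s := Real.sqrt (2 + (1 - t) ^ 2) with hsdef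
  have hs2 : s ^ 2 = 2 + (1 - t) ^ 2 := Real.sq_sqrt hvpos.le
  have hspos : 0 < s := Real.sqrt_pos.2 hvpos
  have h2pos : (0:ℝ) < Real.sqrt 2 := by positivity
  have h22 : Real.sqrt 2 ^ 2 = 2 := Real.sq_sqrt (by norm_num)
  have hgs : Real.sqrt (1 + (1 - t) ^ 2 / 2) = s / Real.sqrt 2 := by
    rw [hveq, Real.sqrt_div hvpos.le]
  rw [show a = fun x => ((3 + x) / Real.sqrt 2) * Real.sqrt (1 + (1 - x) ^ 2 / 2) from rfl]
  convert hA0 using 1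
  · rfl
  · rfl
  · rfl
  rw [hgs]
  unfold aB
  rw [← hsdef]
  simp only [Function.comp_apply]
  rw [hgs]
  field_simp
  ring_nf
  rw [h22]
  linear_combination (-4) * hs2

lemma hS (t : ℝ) : HasDerivAt (fun x : ℝ => Real.sqrt (2 + (1 - x) ^ 2))
    (((2:ℕ) * (1 - t) ^ (2-1) * (-1)) * (1 / (2 * Real.sqrt (2 + (1 - t) ^ 2)))) t := by
  have h1 : HasDerivAt (fun x : ℝ => 1 - x) (-1) t := (hasDerivAt_id t).const_sub 1
  have h2 : HasDerivAt (fun x : ℝ => 2 + (1 - x) ^ 2) ((2:ℕ) * (1 - t) ^ (2-1) * (-1)) t :=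
    (h1.pow 2).const_add 2
  have hvpos : (0:ℝ) < 2 + (1 - t) ^ 2 := by positivity
  have := (Real.hasDerivAt_sqrt hvpos.ne').comp t h2
  convert this using 1
  · rfl
  · rfl
  · rfl
  ring

lemma hB (t : ℝ) : HasDerivAt aB (aB' t) t := by
  have hvpos : (0:ℝ) < 2 + (1 - t) ^ 2 := by positivity
  set s := Real.sqrt (2 + (1 - t) ^ 2) with hsdef
  have hs2 : s ^ 2 = 2 + (1 - t) ^ 2 := Real.sq_sqrt hvpos.le
  have hspos : 0 < s := Real.sqrt_pos.2 hvpos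
  have htt : HasDerivAt (fun x : ℝ => x ^ 2) ((2:ℕ) * t ^ (2-1) * 1) t :=
    (hasDerivAt_id t).pow 2
  have h := htt.div (hS t) hspos.ne'
  convert h using 1
  · rfl
  · rfl
  · rfl
  unfold aB'
  rw [← hsdef]
  rw [hs2]
  field_simp
  linear_combination (-4*t) * hs2

lemma s3pos : (0:ℝ) < Real.sqrt 3 := by positivity

lemma hC : HasDerivAt aB' (2 / Real.sqrt 3) 0 := by
  have hS0 : HasDerivAt (fun x : ℝ => Real.sqrt (2 + (1 - x) ^ 2))
      (((2:ℕ) * (1 - (0:ℝ)) ^ (2-1) * (-1)) * (1 / (2 * Real.sqrt (2 + (1 - (0:ℝ)) ^ 2)))) 0 :=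
    hS 0
  have h1 : HasDerivAt (fun x : ℝ => 1 - x) (-1) (0:ℝ) := (hasDerivAt_id 0).const_sub 1
  have hV : HasDerivAt (fun x : ℝ => 2 + (1 - x) ^ 2) ((2:ℕ) * (1 - (0:ℝ)) ^ (2-1) * (-1)) 0 :=
    (h1.pow 2).const_add 2
  have hSV := hS0.mul hV
  have hS0ne : Real.sqrt (2 + (1 - (0:ℝ)) ^ 2) ≠ 0 := by
    have : (2:ℝ) + (1 - (0:ℝ)) ^ 2 = 3 := by norm_num
    rw [this]; exact s3pos.ne'
  have hSVne : Real.sqrt (2 + (1 - (0:ℝ)) ^ 2) * (2 + (1 - (0:ℝ)) ^ 2) ≠ 0 := by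
    apply mul_ne_zero hS0ne; norm_num
  have hnum1 : HasDerivAt (fun x : ℝ => 2 * x) 2 (0:ℝ) := by
    simpa using (hasDerivAt_id (0:ℝ)).const_mul 2
  have hterm1 := hnum1.div hS0 hS0ne
  have hp : HasDerivAt (fun x : ℝ => x ^ 2 * (1 - x))
      (((2:ℕ) * (0:ℝ) ^ (2-1) * 1) * (1 - 0) + (0:ℝ) ^ 2 * (-1)) 0 :=
    ((hasDerivAt_id (0:ℝ)).pow 2).mul h1
  have hterm2 := hp.div hSV hSVne
  have hsum := hterm1.add hterm2
  have : aB' = fun t => 2 * t / Real.sqrt (2 + (1 - t) ^ 2) +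
      t ^ 2 * (1 - t) / (Real.sqrt (2 + (1 - t) ^ 2) * (2 + (1 - t) ^ 2)) := rfl
  rw [this]
  convert hsum using 1
  · rfl
  · rfl
  · rfl
  have h3 : (2:ℝ) + (1 - (0:ℝ)) ^ 2 = 3 := by norm_num
  rw [h3]
  have hs2 : Real.sqrt 3 ^ 2 = 3 := Real.sq_sqrt (by norm_num)
  simp only [Pi.mul_apply]
  rw [h3]
  field_simp
  norm_num

lemma deriv_a : deriv a = aB := funext fun t => (hA t).deriv

lemma deriv_aB : deriv aB = aB' := funext fun t => (hB t).deriv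

lemma aB_pos {t : ℝ} (ht : t ≠ 0) : 0 < aB t := by
  unfold aB
  have hvpos : (0:ℝ) < 2 + (1 - t) ^ 2 := by positivity
  exact div_pos (by positivity) (Real.sqrt_pos.2 hvpos)

lemma a_cont : Continuous a := by
  unfold a
  fun_prop

lemma smon_left : StrictMonoOn a (Set.Icc (-1 : ℝ) 0) := by
  apply strictMonoOn_of_deriv_pos (convex_Icc _ _) a_cont.continuousOn
  intro x hx
  rw [interior_Icc] at hx
  rw [deriv_a]
  exact aB_pos hx.2.ne

lemma smon_right : StrictMonoOn a (Set.Icc (0 : ℝ) 1) := by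
  apply strictMonoOn_of_deriv_pos (convex_Icc _ _) a_cont.continuousOn
  intro x hx
  rw [interior_Icc] at hx
  rw [deriv_a]
  exact aB_pos hx.1.ne'

theorem a_no_local_extremum :
    deriv a 0 = 0 ∧ deriv (deriv a) 0 = 0 ∧
      deriv (deriv (deriv a)) 0 = 2 / Real.sqrt 3 ∧
      (0 : ℝ) < 2 / Real.sqrt 3 ∧ ¬ IsLocalExtr a 0 := by
  refine ⟨?_, ?_, ?_, ?_, ?_⟩
  · rw [deriv_a]; unfold aB; norm_num
  · rw [deriv_a, deriv_aB]; unfold aB'; norm_num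
  · rw [deriv_a, deriv_aB]; exact hC.deriv
  · positivity
  · rintro (hmin | hmax)
    · have h1 : ∀ᶠ y in nhdsWithin (0:ℝ) (Set.Iio 0), a 0 ≤ a y :=
        hmin.filter_mono nhdsWithin_le_nhds
      have h2 : ∀ᶠ y in nhdsWithin (0:ℝ) (Set.Iio 0), y ∈ Set.Ioo (-1:ℝ) 0 := by
        filter_upwards [self_mem_nhdsWithin,
          eventually_nhdsWithin_of_eventually_nhds
            (eventually_gt_nhds (show (-1:ℝ) < 0 by norm_num))] with y hy hy'
        exact ⟨hy', hy⟩
      obtain ⟨y, hy1, hy2⟩ := (h1.and h2).exists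
      have := smon_left (Set.mem_Icc.2 ⟨hy2.1.le, hy2.2.le⟩)
        (Set.mem_Icc.2 ⟨by norm_num, le_refl 0⟩) hy2.2
      linarith
    · have h1 : ∀ᶠ y in nhdsWithin (0:ℝ) (Set.Ioi 0), a y ≤ a 0 :=
        hmax.filter_mono nhdsWithin_le_nhds
      have h2 : ∀ᶠ y in nhdsWithin (0:ℝ) (Set.Ioi 0), y ∈ Set.Ioo (0:ℝ) 1 := by
        filter_upwards [self_mem_nhdsWithin,
          eventually_nhdsWithin_of_eventually_nhds
            (eventually_lt_nhds (show (0:ℝ) < 1 by norm_num))] with y hy hy'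
        exact ⟨hy, hy'⟩
      obtain ⟨y, hy1, hy2⟩ := (h1.and h2).exists
      have := smon_right (Set.mem_Icc.2 ⟨le_refl 0, by norm_num⟩)
        (Set.mem_Icc.2 ⟨hy2.1.le, hy2.2.le⟩) hy2.1
      linarith
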